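/- arXiv:0903.5344 — 3 statements merged into one kernel-verified Lean document; each statement's English description precedes it below -/
import Mathlib

section
/- Let ν > 0, α ∈ (0,2], and let Σ be a positive definite n×n real matrix. If S is an ℝⁿ-valued random variable with characteristic function t ↦ exp(-(tᵀΣt)^(α/2)) and U is an independent Gamma(ν,1) random variable (density u^(ν-1)e^(-u)/Γ(ν) on [0,∞)), then the random vector X = U^(1/α)·S has characteristic function t ↦ (1 + (tᵀΣt)^(α/2))^(-ν). -/
/-!
Conditioning on `U`: by independence, the characteristic function of `U ^ (1/α) • S` at `t` is
the `Gamma(ν, 1)`-average of `φ_S(u ^ (1/α) • t) = exp (-(u * (tᵀ M t) ^ (α/2)))`, i.e. the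
Laplace transform of the Gamma law at `c = (tᵀ M t) ^ (α/2)`, which is `(1 + c) ^ (-ν)`.
-/

open MeasureTheory ProbabilityTheory Complex Real

/-- The characteristic function of a random vector in ℝⁿ. -/
noncomputable def charFunOf {Ω : Type*} [MeasureSpace Ω] {n : ℕ}
    (X : Ω → EuclideanSpace ℝ (Fin n)) (t : EuclideanSpace ℝ (Fin n)) : ℂ :=
  ∫ ω, Complex.exp (Complex.I * (inner ℝ t (X ω) : ℝ))

lemma Matrix.PosSemidef.sum_mul_mul_nonneg {ι : Type*} [Fintype ι] {M : Matrix ι ι ℝ}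
    (hM : M.PosSemidef) (t : ι → ℝ) : 0 ≤ ∑ i, ∑ j, t i * M i j * t j := by
  simpa [dotProduct, Matrix.mulVec, Finset.mul_sum, mul_assoc] using
    hM.dotProduct_mulVec_nonneg t

lemma Matrix.sum_smul_mul_smul {ι : Type*} [Fintype ι] (M : Matrix ι ι ℝ) (a : ℝ)
    (t : ι → ℝ) :
    ∑ i, ∑ j, (a • t) i * M i j * (a • t) j = a ^ 2 * ∑ i, ∑ j, t i * M i j * t j := by
  simp only [Pi.smul_apply, smul_eq_mul, Finset.mul_sum]
  exact Finset.sum_congr rfl fun i _ => Finset.sum_congr rfl fun j _ => by ring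

lemma rpow_one_div_sq_mul_rpow_div_two {α u q : ℝ} (hα : α ≠ 0) (hu : 0 ≤ u)
    (hq : 0 ≤ q) :
    ((u ^ (1 / α)) ^ 2 * q) ^ (α / 2) = q ^ (α / 2) * u := by
  rw [← rpow_natCast, ← rpow_mul hu, mul_rpow (rpow_nonneg hu _) hq, ← rpow_mul hu]
  norm_num
  field_simp
  rw [rpow_one, mul_comm]

theorem charFunOf_smul_of_indepFun {Ω β : Type*} [MeasureSpace Ω]
    [IsProbabilityMeasure (ℙ : Measure Ω)] [MeasurableSpace β] {n : ℕ} {U : Ω → β}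
    {S : Ω → EuclideanSpace ℝ (Fin n)}
    (hU : AEMeasurable U) (hS : AEMeasurable S) (hindep : IndepFun U S) {f : β → ℝ}
    (hf : Measurable f) (t : EuclideanSpace ℝ (Fin n)) :
    charFunOf (fun ω => f (U ω) • S ω) t =
      ∫ u, charFunOf S (f u • t) ∂(Measure.map U ℙ) := by
  set g : β × EuclideanSpace ℝ (Fin n) → ℂ :=
    fun p => exp (I * (inner ℝ t (f p.1 • p.2) : ℝ))
  have hg : Measurable g := by fun_prop
  have hgS : ∀ u, Measurable fun s => g (u, s) := fun u => hg.comp measurable_prodMk_left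
  have hlaw :
      Measure.map (fun ω => (U ω, S ω)) ℙ = (Measure.map U ℙ).prod (Measure.map S ℙ) :=
    (indepFun_iff_map_prod_eq_prod_map_map hU hS).mp hindep
  have : IsProbabilityMeasure (Measure.map U ℙ) := Measure.isProbabilityMeasure_map hU
  have : IsProbabilityMeasure (Measure.map S ℙ) := Measure.isProbabilityMeasure_map hS
  have hgint : Integrable g ((Measure.map U ℙ).prod (Measure.map S ℙ)) :=
    .of_bound hg.aestronglyMeasurable 1 (.of_forall fun p => by simp [g, norm_exp])
  calc charFunOf (fun ω => f (U ω) • S ω) t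
      = ∫ p, g p ∂(Measure.map (fun ω => (U ω, S ω)) ℙ) :=
        (integral_map (hU.prodMk hS) hg.aestronglyMeasurable).symm
    _ = ∫ u, ∫ s, g (u, s) ∂(Measure.map S ℙ) ∂(Measure.map U ℙ) := by
        rw [hlaw, integral_prod _ hgint]
    _ = ∫ u, charFunOf S (f u • t) ∂(Measure.map U ℙ) := by
        refine integral_congr_ae (.of_forall fun u => ?_)
        refine (integral_map hS (hgS u).aestronglyMeasurable).trans ?_
        simp only [charFunOf, g, real_inner_smul_left, real_inner_smul_right]

lemma gammaMeasure_one (a : ℝ) :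
    gammaMeasure a 1 = volume.withDensity fun u =>
      ENNReal.ofReal (if 0 ≤ u then u ^ (a - 1) * rexp (-u) / Real.Gamma a else 0) := by
  unfold gammaMeasure
  congr 1
  funext u
  rw [gammaPDF_eq]
  congr 2
  simp only [one_rpow, one_mul]
  ring

lemma ae_nonneg_gammaMeasure (a r : ℝ) : ∀ᵐ x ∂gammaMeasure a r, 0 ≤ x := by
  rw [gammaMeasure, ae_withDensity_iff (by unfold gammaPDF; fun_prop)]
  exact .of_forall fun x hx => not_lt.mp fun h => hx (gammaPDF_of_neg h)

lemma integral_exp_neg_mul_gammaMeasure {a r c : ℝ} (ha : 0 < a) (hr : 0 ≤ r)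
    (hrc : 0 < r + c) :
    ∫ x, rexp (-(c * x)) ∂gammaMeasure a r = (r / (r + c)) ^ a := by
  have hpdf : ∀ x, (gammaPDFReal a r x).toNNReal • rexp (-(c * x)) = (Set.Ici 0).indicator
      (fun x => r ^ a / Real.Gamma a * (x ^ (a - 1) * rexp (-((r + c) * x)))) x := by
    intro x
    by_cases hx : 0 ≤ x
    · have hpos : 0 ≤ r ^ a / Real.Gamma a * x ^ (a - 1) * rexp (-(r * x)) := by positivity
      rw [Set.indicator_of_mem (Set.mem_Ici.2 hx), gammaPDFReal, if_pos hx, NNReal.smul_def,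
        Real.coe_toNNReal _ hpos, smul_eq_mul, mul_assoc, mul_assoc, ← Real.exp_add]
      ring_nf
    · rw [Set.indicator_of_notMem (mt Set.mem_Ici.1 hx), gammaPDFReal, if_neg hx,
        Real.toNNReal_zero, zero_smul]
  calc ∫ x, rexp (-(c * x)) ∂gammaMeasure a r
      = ∫ x, (gammaPDFReal a r x).toNNReal • rexp (-(c * x)) :=
        integral_withDensity_eq_integral_smul (measurable_gammaPDFReal a r).real_toNNReal _
    _ = r ^ a / Real.Gamma a * ((1 / (r + c)) ^ a * Real.Gamma a) := by
        simp_rw [hpdf]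
        rw [integral_indicator measurableSet_Ici, integral_Ici_eq_integral_Ioi, integral_const_mul,
          integral_rpow_mul_exp_neg_mul_Ioi ha hrc]
    _ = (r / (r + c)) ^ a := by
        rw [div_rpow hr hrc.le, one_div, inv_rpow hrc.le]
        field_simp [(Gamma_pos_of_pos ha).ne']

theorem stmt_0 {Ω : Type*} [MeasureSpace Ω] [IsProbabilityMeasure (ℙ : Measure Ω)]
    {n : ℕ} (α ν : ℝ) (hα : α ∈ Set.Ioc (0:ℝ) 2) (hν : 0 < ν)
    (M : Matrix (Fin n) (Fin n) ℝ) (hM : M.PosDef)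
    (S : Ω → EuclideanSpace ℝ (Fin n)) (U : Ω → ℝ)
    (hSmeas : Measurable S) (hUmeas : Measurable U)
    (hindep : IndepFun U S)
    (hS : ∀ t : EuclideanSpace ℝ (Fin n),
      charFunOf S t = Complex.exp (-((∑ i, ∑ j, t i * M i j * t j) ^ (α / 2) : ℝ)))
    (hU : Measure.map U ℙ = volume.withDensity
      (fun u => ENNReal.ofReal
        (if 0 ≤ u then u ^ (ν - 1) * Real.exp (-u) / Real.Gamma ν else 0))) :
    ∀ t : EuclideanSpace ℝ (Fin n),
      charFunOf (fun ω => (U ω) ^ (1 / α) • S ω) t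
        = (1 + (((∑ i, ∑ j, t i * M i j * t j : ℝ) ^ (α / 2) : ℝ) : ℂ)) ^ (-ν : ℂ) := by
  intro t
  set c := (∑ i, ∑ j, t i * M i j * t j) ^ (α / 2)
  have hq : 0 ≤ ∑ i, ∑ j, t i * M i j * t j := hM.posSemidef.sum_mul_mul_nonneg t
  have hc : 0 ≤ c := rpow_nonneg hq _
  have hscaled : ∀ᵐ u ∂gammaMeasure ν 1,
      charFunOf S (u ^ (1 / α) • t) = (rexp (-(c * u)) : ℂ) := by
    filter_upwards [ae_nonneg_gammaMeasure ν 1] with u hu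
    rw [hS, WithLp.ofLp_smul, M.sum_smul_mul_smul,
      rpow_one_div_sq_mul_rpow_div_two hα.1.ne' hu hq, ofReal_exp]
    push_cast
    rfl
  rw [charFunOf_smul_of_indepFun hUmeas.aemeasurable hSmeas.aemeasurable hindep
      (f := fun u => u ^ (1 / α)) (by fun_prop), hU, ← gammaMeasure_one,
    integral_congr_ae hscaled, integral_complex_ofReal,
    integral_exp_neg_mul_gammaMeasure hν zero_le_one (by positivity)]
  rw [one_div, inv_rpow (by positivity), ← rpow_neg (by positivity), ofReal_cpow (by positivity)]
  push_cast
  rfl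
end

section
/- Let α ∈ (0,2), ν > 0, N a positive integer, and r > 0, u > 0. Define R_N(r,u) implicitly by (1 + e^(iπα/2) r^(-α) u^α)^(-ν) = Σ_{j=0}^{N-1} ((-1)^j/j!)·(Γ(ν+j)/Γ(ν))·e^(iπαj/2) r^(-αj) u^(αj) + R_N(r,u). Then |R_N(r,u)| ≤ (Γ(N+ν)/(N! Γ(ν) sin^(ν+N)(πα/2))) · r^(-αN) u^(αN). -/
open Real Complex Finset
open scoped Nat ComplexConjugate

/-! With `w = exp (iπα/2)` and `t = r^(-α) u^α`, the left-hand side is the Taylor remainder of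
order `N` at `t` of `s ↦ (1 + s w)^(-ν)`, whose `j`-th derivative is
`(-ν)(-ν-1)⋯(-ν-j+1) w^j (1 + s w)^(-ν-j)`. The line `s ↦ 1 + s w` stays at distance
`sin (πα/2)` from the origin, so the `N`-th derivative is bounded by
`Γ(ν+N)/Γ(ν) · sin^(-ν-N)(πα/2)`, and the integral form of the remainder contributes `t^N/N!`. -/

/-- Unlike `taylor_mean_remainder_bound`, this has the sharp constant `(n + 1)!`. -/
theorem norm_sub_taylorWithinEval_le {E : Type*} [NormedAddCommGroup E] [NormedSpace ℝ E]
    [CompleteSpace E] {f : ℝ → E} {a b C : ℝ} {n : ℕ} (hab : a ≤ b)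
    (hf : ContDiffOn ℝ (n + 1 : ℕ) f (Set.Icc a b))
    (hC : ∀ y ∈ Set.Icc a b, ‖iteratedDerivWithin (n + 1) f (Set.Icc a b) y‖ ≤ C) :
    ‖f b - taylorWithinEval f n (Set.Icc a b) a b‖ ≤ C * (b - a) ^ (n + 1) / (n + 1)! := by
  rw [← Set.uIcc_of_le hab] at hf hC ⊢
  rw [taylor_integral_remainder hf]
  calc ‖∫ s in a..b, ((b - s) ^ n / n !) • iteratedDerivWithin (n + 1) f (Set.uIcc a b) s‖
      ≤ ∫ s in a..b, (b - s) ^ n / n ! * C := by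
        refine intervalIntegral.norm_integral_le_of_norm_le hab (.of_forall fun s hs => ?_)
          (Continuous.intervalIntegrable (by fun_prop) a b)
        have hs' : 0 ≤ b - s := sub_nonneg.2 hs.2
        rw [norm_smul, Real.norm_of_nonneg (by positivity)]
        refine mul_le_mul_of_nonneg_left (hC s ?_) (by positivity)
        rw [Set.uIcc_of_le hab]
        exact Set.Ioc_subset_Icc_self hs
    _ = C * (b - a) ^ (n + 1) / (n + 1)! := by
        simp only [intervalIntegral.integral_mul_const, intervalIntegral.integral_div,
          intervalIntegral.integral_comp_sub_left (fun x => x ^ n), integral_pow, sub_self]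
        push_cast [Nat.factorial_succ]
        field_simp
        ring

theorem norm_sub_sum_iteratedDeriv_le {E : Type*} [NormedAddCommGroup E] [NormedSpace ℝ E]
    [CompleteSpace E] {f : ℝ → E} {a b C : ℝ} {n : ℕ} (hab : a < b) (hf : ContDiff ℝ n f)
    (hC : ∀ y ∈ Set.Icc a b, ‖iteratedDeriv n f y‖ ≤ C) :
    ‖f b - ∑ k ∈ range n, ((k ! : ℝ)⁻¹ * (b - a) ^ k) • iteratedDeriv k f a‖
      ≤ C * (b - a) ^ n / n ! := by
  cases n with
  | zero => simpa using hC b ⟨hab.le, le_rfl⟩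
  | succ n =>
    have hwithin : ∀ k ≤ n + 1, ∀ y ∈ Set.Icc a b,
        iteratedDerivWithin k f (Set.Icc a b) y = iteratedDeriv k f y := fun k hk y hy =>
      iteratedDerivWithin_eq_iteratedDeriv (uniqueDiffOn_Icc hab)
        (hf.of_le (by exact_mod_cast hk)).contDiffAt hy
    have h := norm_sub_taylorWithinEval_le hab.le hf.contDiffOn
      fun y hy => hwithin _ le_rfl y hy ▸ hC y hy
    rwa [taylor_within_apply, sum_congr rfl fun k hk => by
      rw [hwithin k (mem_range.1 hk).le a ⟨le_rfl, hab.le⟩]] at h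

theorem descPochhammer_eval_neg_eq_Gamma_div {ν : ℝ} (hν : 0 < ν) (j : ℕ) :
    (descPochhammer ℂ j).eval (-(ν : ℂ)) =
      (-1) ^ j * ((Real.Gamma (ν + j) / Real.Gamma ν : ℝ) : ℂ) := by
  have hν' : ∀ k : ℕ, (ν : ℂ) ≠ -k := fun k h => by
    have := congrArg re h
    simp only [ofReal_re, neg_re, natCast_re] at this
    linarith [k.cast_nonneg (α := ℝ)]
  have h := ascPochhammer_eval_neg_eq_descPochhammer (R := ℂ) (-ν) j
  rw [neg_neg, ← Complex.Gamma_add_nat_div_Gamma_eq _ hν'] at h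
  push_cast [← Complex.Gamma_ofReal]
  rw [h, ← mul_assoc, ← mul_pow, neg_one_mul, neg_neg, one_pow, one_mul]

namespace Complex

variable {w : ℂ}

theorem one_add_ofReal_mul_mem_slitPlane (hw : w.im ≠ 0) (s : ℝ) :
    1 + s * w ∈ slitPlane := by
  rcases eq_or_ne s 0 with rfl | hs
  · simp
  · exact mem_slitPlane_iff.2 (Or.inr (by simpa using mul_ne_zero hs hw))

theorem abs_im_le_norm_one_add_ofReal_mul (hw : ‖w‖ = 1) (s : ℝ) :
    |w.im| ≤ ‖1 + s * w‖ := by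
  have hconj : w * (conj w + s) = 1 + s * w := by
    rw [mul_add, mul_conj, normSq_eq_norm_sq, hw]
    push_cast
    ring
  calc |w.im| = |(conj w + s).im| := by simp
    _ ≤ ‖conj w + s‖ := abs_im_le_norm _
    _ = ‖1 + s * w‖ := by rw [← hconj, norm_mul, hw, one_mul]

theorem contDiff_cpow_one_add_ofReal_mul (hw : w.im ≠ 0) (c : ℂ) {n : WithTop ℕ∞} :
    ContDiff ℝ n fun s : ℝ => (1 + s * w) ^ c :=
  contDiff_iff_contDiffAt.2 fun s =>
    ((analyticAt_id.cpow analyticAt_const (one_add_ofReal_mul_mem_slitPlane hw s)).contDiffAt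
      |>.restrict_scalars ℝ).comp s (contDiffAt_const.add (ofRealCLM.contDiff.contDiffAt.mul
        contDiffAt_const))

theorem iteratedDeriv_cpow_one_add_ofReal_mul (hw : w.im ≠ 0) (c : ℂ) (j : ℕ) :
    iteratedDeriv j (fun s : ℝ => (1 + s * w) ^ c) =
      fun s : ℝ => (descPochhammer ℂ j).eval c * (1 + s * w) ^ (c - j) * w ^ j := by
  induction j with
  | zero => simp
  | succ j ih =>
    ext s
    have hinner : HasDerivAt (fun s : ℝ => 1 + s * w) w s := by
      simpa using ((ofRealCLM.hasDerivAt (x := s)).mul_const w).const_add 1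
    have hpow : HasDerivAt (fun s : ℝ => (1 + s * w) ^ (c - j))
        ((c - j) * (1 + s * w) ^ (c - j - 1) * w) s :=
      HasDerivAt.comp (h₂ := fun z : ℂ => z ^ (c - j)) s
        (hasStrictDerivAt_cpow_const (one_add_ofReal_mul_mem_slitPlane hw s)).hasDerivAt hinner
    rw [iteratedDeriv_succ, ih, ((hpow.const_mul _).mul_const _).deriv, descPochhammer_succ_right,
      Polynomial.eval_mul, Polynomial.eval_sub, Polynomial.eval_X, Polynomial.eval_natCast,
      sub_sub, Nat.cast_succ]
    ring

theorem norm_iteratedDeriv_cpow_one_add_ofReal_mul_le (hw : ‖w‖ = 1) (hw' : w.im ≠ 0)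
    {ν : ℝ} (hν : 0 < ν) (n : ℕ) (s : ℝ) :
    ‖iteratedDeriv n (fun s : ℝ => (1 + s * w) ^ (-(ν : ℂ))) s‖
      ≤ Real.Gamma (ν + n) / Real.Gamma ν * |w.im| ^ (-(ν + n)) := by
  have hexp : -(ν : ℂ) - n = ((-(ν + n) : ℝ) : ℂ) := by push_cast; ring
  rw [iteratedDeriv_cpow_one_add_ofReal_mul hw', descPochhammer_eval_neg_eq_Gamma_div hν,
    hexp, norm_mul, norm_mul, norm_mul, norm_pow, norm_pow, hw, norm_neg, norm_one, one_pow,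
    one_mul, mul_one, norm_real, Real.norm_of_nonneg (by positivity), norm_cpow_real]
  gcongr _ * ?_
  exact Real.rpow_le_rpow_of_nonpos (abs_pos.2 hw') (abs_im_le_norm_one_add_ofReal_mul hw s)
    (by linarith [n.cast_nonneg (α := ℝ)])

theorem norm_cpow_one_add_ofReal_mul_sub_sum_le (hw : ‖w‖ = 1) (hw' : w.im ≠ 0) {ν t : ℝ}
    (hν : 0 < ν) (ht : 0 < t) (N : ℕ) :
    ‖(1 + t * w) ^ (-(ν : ℂ)) - ∑ j ∈ range N,
        (-1) ^ j / (j ! : ℂ) * ((Real.Gamma (ν + j) / Real.Gamma ν : ℝ) : ℂ) * (t * w) ^ j‖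
      ≤ Real.Gamma (ν + N) / (N ! * Real.Gamma ν * |w.im| ^ (ν + N)) * t ^ N := by
  have hcoeff : ∀ j ∈ range N,
      (-1) ^ j / (j ! : ℂ) * ((Real.Gamma (ν + j) / Real.Gamma ν : ℝ) : ℂ) * (t * w) ^ j =
        ((j ! : ℝ)⁻¹ * (t - 0) ^ j) •
          iteratedDeriv j (fun s : ℝ => (1 + s * w) ^ (-(ν : ℂ))) 0 := fun j _ => by
    rw [iteratedDeriv_cpow_one_add_ofReal_mul hw', descPochhammer_eval_neg_eq_Gamma_div hν,
      real_smul]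
    simp only [ofReal_zero, zero_mul, add_zero, one_cpow, sub_zero]
    push_cast
    ring
  rw [sum_congr rfl hcoeff]
  refine (norm_sub_sum_iteratedDeriv_le ht (contDiff_cpow_one_add_ofReal_mul hw' _)
    fun s _ => norm_iteratedDeriv_cpow_one_add_ofReal_mul_le hw hw' hν N s).trans_eq ?_
  rw [Real.rpow_neg (abs_nonneg _), sub_zero]
  ring

end Complex

theorem stmt_8_general (α ν : ℝ) (hα : α ∈ Set.Ioo (0:ℝ) 2) (hν : 0 < ν)
    (N : ℕ) (r u : ℝ) (hr : 0 < r) (hu : 0 < u) :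
    ‖((1 + Complex.exp (π * α / 2 * Complex.I) * (r : ℂ) ^ (-(α : ℂ)) * (u : ℂ) ^ (α : ℂ))
          ^ (-(ν : ℂ))
        - ∑ j ∈ Finset.range N, ((-1 : ℂ) ^ j / (Nat.factorial j)) *
            ((Real.Gamma (ν + j) / Real.Gamma ν : ℝ) : ℂ) *
            Complex.exp (π * α * j / 2 * Complex.I) *
            (r : ℂ) ^ (-(α : ℂ) * j) * (u : ℂ) ^ ((α : ℂ) * j))‖
      ≤ (Real.Gamma (N + ν) / (Nat.factorial N * Real.Gamma ν *
          Real.sin (π * α / 2) ^ ((ν : ℝ) + N))) * r ^ (-(α * N)) * u ^ (α * N) := by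
  set θ : ℝ := π * α / 2 with hθ
  have hsin : 0 < Real.sin θ := Real.sin_pos_of_pos_of_lt_pi (by nlinarith [pi_pos, hα.1])
    (by nlinarith [pi_pos, hα.2])
  set w := Complex.exp (θ * I)
  have hw_im : w.im = Real.sin θ := exp_ofReal_mul_I_im θ
  have hw_pos : 0 < w.im := hw_im ▸ hsin
  set t := r ^ (-α) * u ^ α
  have hpow : ∀ j : ℕ, Complex.exp (π * α * j / 2 * I) * (r : ℂ) ^ (-(α : ℂ) * j) *
      (u : ℂ) ^ ((α : ℂ) * j) = (t * w) ^ j := fun j => by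
    have hexp : Complex.exp (π * α * j / 2 * I) = w ^ j := by
      rw [← Complex.exp_nat_mul]; push_cast [w, hθ]; ring_nf
    rw [hexp, mul_comm _ (j : ℂ), mul_comm _ (j : ℂ), cpow_nat_mul, cpow_nat_mul]
    push_cast [t, ofReal_cpow hr.le, ofReal_cpow hu.le]
    ring
  have hpowR : r ^ (-(α * N)) * u ^ (α * N) = t ^ N := by
    rw [← neg_mul, rpow_mul hr.le, rpow_mul hu.le, rpow_natCast, rpow_natCast, mul_pow]
  have hsum : ∀ j ∈ range N, (-1 : ℂ) ^ j / (j ! : ℂ) *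
      ((Real.Gamma (ν + j) / Real.Gamma ν : ℝ) : ℂ) * Complex.exp (π * α * j / 2 * I) *
      (r : ℂ) ^ (-(α : ℂ) * j) * (u : ℂ) ^ ((α : ℂ) * j) =
        (-1) ^ j / (j ! : ℂ) * ((Real.Gamma (ν + j) / Real.Gamma ν : ℝ) : ℂ) * (t * w) ^ j :=
    fun j _ => by rw [← hpow j]; ring
  have hlhs : Complex.exp (π * α / 2 * I) * (r : ℂ) ^ (-(α : ℂ)) * (u : ℂ) ^ (α : ℂ) = t * w := by
    simpa using hpow 1
  rw [sum_congr rfl hsum, hlhs, mul_assoc, hpowR, add_comm (N : ℝ), ← hw_im,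
    ← abs_of_pos hw_pos]
  exact norm_cpow_one_add_ofReal_mul_sub_sum_le (norm_exp_ofReal_mul_I θ) hw_pos.ne' hν
    (by positivity) N

theorem stmt_8 (α ν : ℝ) (hα : α ∈ Set.Ioo (0:ℝ) 2) (hν : 0 < ν)
    (N : ℕ) (hN : 0 < N) (r u : ℝ) (hr : 0 < r) (hu : 0 < u) :
    ‖((1 + Complex.exp (π * α / 2 * Complex.I) * (r : ℂ) ^ (-(α : ℂ)) * (u : ℂ) ^ (α : ℂ))
          ^ (-(ν : ℂ))
        - ∑ j ∈ Finset.range N, ((-1 : ℂ) ^ j / (Nat.factorial j)) *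
            ((Real.Gamma (ν + j) / Real.Gamma ν : ℝ) : ℂ) *
            Complex.exp (π * α * j / 2 * Complex.I) *
            (r : ℂ) ^ (-(α : ℂ) * j) * (u : ℂ) ^ ((α : ℂ) * j))‖
      ≤ (Real.Gamma (N + ν) / (Nat.factorial N * Real.Gamma ν *
          Real.sin (π * α / 2) ^ ((ν : ℝ) + N))) * r ^ (-(α * N)) * u ^ (α * N) :=
  stmt_8_general α ν hα hν N r u hr hu
end

section
/- Let α ∈ (0,2), ν > 0, n ≥ 1, r > 0, and suppose q(r) = (r^((2-n)/2)/(2^((n-2)/2) π^((n+2)/2))) ∫₀^∞ [sin(ν·arg(1+e^(iπα/2)u^α)) / |1+e^(iπα/2)u^α|^ν] K_{(n-2)/2}(ru) u^(n/2) du with αν ≤ 2 and n = 1. Then q(r) = (1/π) ∫₀^∞ [sin(ν·arg(1+e^(iπα/2)u^α)) / |1+e^(iπα/2)u^α|^ν] e^(-ru) du, and consequently q is completely monotonic on (0,∞). -/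
/-!
For `n = 1` the kernel `K_{-1/2}(z) = √(π / (2z)) e^{-z}` turns the Hankel-type transform
into the Laplace transform `(1/π) ∫₀^∞ g(u) e^{-ru} du` of the weight
`g = sin (ν arg w) / ‖w‖^ν`, `w = 1 + e^{iπα/2} u^α`. Since `0 ≤ arg w ≤ πα/2` and
`‖w‖ ≥ sin (πα/2)`, the weight is bounded, and nonnegative because `αν ≤ 2`; differentiating
under the integral sign gives `(-1)^k q^{(k)}(r) = (1/π) ∫₀^∞ g(u) u^k e^{-ru} du ≥ 0`.
-/

open MeasureTheory Real Complex

/-- The modified Bessel function of the second kind, via its standard integral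
representation `K_μ(z) = ∫₀^∞ e^{-z cosh t} cosh(μ t) dt` (valid for `z > 0`). -/
noncomputable def besselK (μ z : ℝ) : ℝ :=
  ∫ t in Set.Ioi (0:ℝ), Real.exp (-z * Real.cosh t) * Real.cosh (μ * t)

open Set Filter Topology

lemma image_two_mul_arsinh_Ioi : (fun s => 2 * arsinh s) '' Ioi 0 = Ioi 0 := by
  ext t
  constructor
  · rintro ⟨s, hs, rfl⟩
    exact mul_pos two_pos (arsinh_pos_iff.mpr hs)
  · intro ht
    refine ⟨Real.sinh (t / 2), Real.sinh_pos_iff.mpr (half_pos ht), ?_⟩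
    simp only [arsinh_sinh]
    ring

lemma cosh_two_mul_arsinh (s : ℝ) : Real.cosh (2 * arsinh s) = 1 + 2 * s ^ 2 := by
  rw [Real.cosh_two_mul, cosh_arsinh, sinh_arsinh, sq_sqrt (by positivity)]
  ring

-- `t = 2 arsinh s` turns the integral into a Gaussian one, since `cosh t = 1 + 2 s²`.
-- For `z ≤ 0` both sides are junk zeros (non-integrable integrand, `√` of a nonpositive number).
lemma besselK_neg_half (z : ℝ) :
    besselK (-(1:ℝ)/2) z = √(π / (2 * z)) * Real.exp (-z) := by
  have hderiv : ∀ s ∈ Ioi (0:ℝ),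
      HasDerivWithinAt (fun s => 2 * arsinh s) (2 * (√(1 + s ^ 2))⁻¹) (Ioi 0) s :=
    fun s _ => ((hasDerivAt_arsinh s).const_mul 2).hasDerivWithinAt
  have hsubst := integral_image_eq_integral_abs_deriv_smul measurableSet_Ioi hderiv
    (arsinh_strictMono.const_mul two_pos).injective.injOn
    (fun t => Real.exp (-z * Real.cosh t) * Real.cosh (-(1:ℝ)/2 * t))
  rw [image_two_mul_arsinh_Ioi] at hsubst
  calc besselK (-(1:ℝ)/2) z
      = ∫ s in Ioi (0:ℝ), 2 * Real.exp (-z) * Real.exp (-(2 * z) * s ^ 2) := by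
        rw [besselK, hsubst]
        refine setIntegral_congr_fun measurableSet_Ioi fun s _ => ?_
        have hsq : 0 < √(1 + s ^ 2) := sqrt_pos.mpr (by positivity)
        rw [smul_eq_mul, cosh_two_mul_arsinh, show -(1:ℝ)/2 * (2 * arsinh s) = -arsinh s by ring,
          Real.cosh_neg, cosh_arsinh, abs_of_pos (by positivity), mul_assoc 2 (Real.exp _),
          ← Real.exp_add]
        field_simp
        ring_nf
    _ = √(π / (2 * z)) * Real.exp (-z) := by
        rw [integral_const_mul, integral_gaussian_Ioi]
        ring

lemma rpow_half_div_mul_besselK_neg_half {r u : ℝ} (hr : 0 < r) (hu : 0 < u) :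
    r ^ ((1 : ℝ) / 2) / (2 ^ (-(1 : ℝ) / 2) * π ^ ((3 : ℝ) / 2)) *
      (besselK (-(1 : ℝ) / 2) (r * u) * u ^ ((1 : ℝ) / 2)) = 1 / π * Real.exp (-r * u) := by
  have hπ : π ^ ((3 : ℝ) / 2) = π * √π := by
    rw [sqrt_eq_rpow, ← rpow_one_add' pi_pos.le (by norm_num)]
    norm_num
  have h2 : (2 : ℝ) ^ (-(1 : ℝ) / 2) = (√2)⁻¹ := by
    rw [sqrt_eq_rpow, ← rpow_neg zero_le_two, neg_div]
  rw [besselK_neg_half, hπ, h2, ← sqrt_eq_rpow, ← sqrt_eq_rpow, sqrt_div pi_pos.le,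
    sqrt_mul zero_le_two, sqrt_mul hr.le, neg_mul]
  have := sqrt_pos.mpr hr
  have := sqrt_pos.mpr hu
  have := sqrt_pos.mpr pi_pos
  field_simp

section OnePlusRotation

variable (θ t : ℝ)

lemma re_one_add_exp_mul_I_mul : (1 + Complex.exp (θ * I) * t).re = 1 + Real.cos θ * t := by
  simp [Complex.exp_ofReal_mul_I_re]

lemma im_one_add_exp_mul_I_mul : (1 + Complex.exp (θ * I) * t).im = Real.sin θ * t := by
  simp [Complex.exp_ofReal_mul_I_im]

lemma sin_le_norm_one_add_exp_mul_I_mul : Real.sin θ ≤ ‖1 + Complex.exp (θ * I) * t‖ := by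
  refine abs_le_of_sq_le_sq' ?_ (norm_nonneg _) |>.2
  rw [Complex.sq_norm, normSq_apply, re_one_add_exp_mul_I_mul, im_one_add_exp_mul_I_mul]
  nlinarith [Real.sin_sq_add_cos_sq θ, sq_nonneg (Real.cos θ + t)]

variable {θ t}

lemma arg_one_add_exp_mul_I_mul_nonneg (hθ : θ ∈ Icc 0 π) (ht : 0 ≤ t) :
    0 ≤ (1 + Complex.exp (θ * I) * t).arg := by
  rw [arg_nonneg_iff, im_one_add_exp_mul_I_mul]
  exact mul_nonneg (sin_nonneg_of_nonneg_of_le_pi hθ.1 hθ.2) ht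

lemma one_add_exp_mul_I_mul_mem_slitPlane (hθ : θ ∈ Ioo 0 π) (ht : 0 < t) :
    1 + Complex.exp (θ * I) * t ∈ slitPlane := by
  rw [mem_slitPlane_iff, im_one_add_exp_mul_I_mul]
  exact .inr (mul_pos (sin_pos_of_pos_of_lt_pi hθ.1 hθ.2) ht).ne'

-- `w = 1 + e^{iθ} t` has `sin (θ - arg w) = sin θ / ‖w‖ > 0`
lemma arg_one_add_exp_mul_I_mul_le (hθ : θ ∈ Ioo 0 π) (ht : 0 < t) :
    (1 + Complex.exp (θ * I) * t).arg ≤ θ := by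
  set w := 1 + Complex.exp (θ * I) * t
  have hw : w ≠ 0 := slitPlane_ne_zero (one_add_exp_mul_I_mul_mem_slitPlane hθ ht)
  have hsin_sub : Real.sin (θ - w.arg) = Real.sin θ / ‖w‖ := by
    rw [Real.sin_sub, Complex.cos_arg hw, Complex.sin_arg, re_one_add_exp_mul_I_mul,
      im_one_add_exp_mul_I_mul]
    field_simp
    ring
  by_contra! hlt
  have : Real.sin (θ - w.arg) < 0 := Real.sin_neg_of_neg_of_neg_pi_lt (by linarith)
    (by linarith [hθ.1, arg_le_pi w])
  rw [hsin_sub] at this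
  exact (div_pos (sin_pos_of_pos_of_lt_pi hθ.1 hθ.2) (norm_pos_iff.mpr hw)).not_gt this

end OnePlusRotation

lemma one_add_exp_mul_cpow_eq {u : ℝ} (α : ℝ) (hu : 0 ≤ u) :
    1 + Complex.exp (π * α / 2 * I) * (u : ℂ) ^ (α : ℂ) =
      1 + Complex.exp (↑(π * α / 2) * I) * ↑(u ^ α) := by
  rw [ofReal_cpow hu]
  push_cast
  rfl

lemma pi_mul_div_two_mem_Ioo {α : ℝ} (hα : α ∈ Ioo 0 2) : π * α / 2 ∈ Ioo 0 π :=
  ⟨by have := hα.1; positivity, by nlinarith [hα.2, pi_pos]⟩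

noncomputable def argWeight (α ν u : ℝ) : ℝ :=
  Real.sin (ν * Complex.arg (1 + Complex.exp (π * α / 2 * Complex.I) * (u : ℂ) ^ (α : ℂ))) /
    ‖1 + Complex.exp (π * α / 2 * Complex.I) * (u : ℂ) ^ (α : ℂ)‖ ^ ν

namespace argWeight

variable {α ν u : ℝ} (hα : α ∈ Ioo 0 2)
include hα

lemma nonneg (hν : 0 ≤ ν) (hαν : α * ν ≤ 2) (hu : 0 < u) : 0 ≤ argWeight α ν u := by
  have hθ := pi_mul_div_two_mem_Ioo hα
  have hrpow := rpow_pos_of_pos hu α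
  rw [argWeight, one_add_exp_mul_cpow_eq α hu.le]
  refine div_nonneg (sin_nonneg_of_nonneg_of_le_pi ?_ ?_) (by positivity)
  · exact mul_nonneg hν (arg_one_add_exp_mul_I_mul_nonneg (Ioo_subset_Icc_self hθ) hrpow.le)
  · calc ν * _ ≤ ν * (π * α / 2) :=
          mul_le_mul_of_nonneg_left (arg_one_add_exp_mul_I_mul_le hθ hrpow) hν
      _ ≤ π := by nlinarith [pi_pos]

lemma abs_le (hν : 0 ≤ ν) (hu : 0 < u) :
    |argWeight α ν u| ≤ (Real.sin (π * α / 2) ^ ν)⁻¹ := by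
  have hθ := pi_mul_div_two_mem_Ioo hα
  have hsin := sin_pos_of_pos_of_lt_pi hθ.1 hθ.2
  rw [argWeight, one_add_exp_mul_cpow_eq α hu.le, abs_div,
    abs_of_nonneg (rpow_nonneg (norm_nonneg _) _), ← one_div]
  exact div_le_div₀ zero_le_one (abs_sin_le_one _) (by positivity)
    (rpow_le_rpow hsin.le (sin_le_norm_one_add_exp_mul_I_mul _ _) hν)

lemma continuousOn : ContinuousOn (argWeight α ν) (Ioi 0) := by
  have hθ := pi_mul_div_two_mem_Ioo hα
  set w := fun u : ℝ => 1 + Complex.exp (π * α / 2 * I) * (u : ℂ) ^ (α : ℂ)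
  have hw : ContinuousOn w (Ioi 0) := by
    refine ContinuousOn.congr (f := fun u : ℝ => 1 + Complex.exp (↑(π * α / 2) * I) * ↑(u ^ α))
      ?_ fun u hu => one_add_exp_mul_cpow_eq α (le_of_lt hu)
    exact continuousOn_const.add (continuousOn_const.mul
      (continuous_ofReal.comp_continuousOn
        (continuousOn_id.rpow_const fun u hu => .inl (ne_of_gt hu))))
  have hslit : ∀ u ∈ Ioi (0:ℝ), w u ∈ slitPlane := fun u (hu : 0 < u) => by
    simp only [w, one_add_exp_mul_cpow_eq α hu.le]
    exact one_add_exp_mul_I_mul_mem_slitPlane hθ (rpow_pos_of_pos hu α)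
  refine ContinuousOn.div ?_ ((continuous_norm.comp_continuousOn hw).rpow_const fun u hu =>
      .inl (norm_ne_zero_iff.mpr (slitPlane_ne_zero (hslit u hu)))) fun u hu =>
      (rpow_pos_of_pos (norm_pos_iff.mpr (slitPlane_ne_zero (hslit u hu))) ν).ne'
  exact continuous_sin.comp_continuousOn (continuousOn_const.mul
    fun u hu => (continuousAt_arg (hslit u hu)).comp_continuousWithinAt (f := w) (hw u hu))

end argWeight

noncomputable def laplaceMoment (g : ℝ → ℝ) (k : ℕ) (r : ℝ) : ℝ :=
  ∫ u in Ioi 0, g u * u ^ k * Real.exp (-r * u)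

namespace laplaceMoment

variable {g : ℝ → ℝ} {C : ℝ}
  (hg : AEStronglyMeasurable g (volume.restrict (Ioi 0))) (hgC : ∀ u ∈ Ioi (0:ℝ), |g u| ≤ C)
include hg hgC

lemma integrableOn_integrand (k : ℕ) {r : ℝ} (hr : 0 < r) :
    IntegrableOn (fun u => g u * u ^ k * Real.exp (-r * u)) (Ioi 0) := by
  have hexp : IntegrableOn (fun u : ℝ => u ^ k * Real.exp (-r * u)) (Ioi 0) := by
    simpa [Real.rpow_natCast] using
      integrableOn_rpow_mul_exp_neg_mul_rpow (s := k) (by linarith [k.cast_nonneg (α := ℝ)])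
        zero_lt_one hr
  simp_rw [mul_assoc]
  exact hexp.bdd_mul (c := C) hg ((ae_restrict_iff' measurableSet_Ioi).mpr (.of_forall hgC))

lemma hasDerivAt (k : ℕ) {r : ℝ} (hr : 0 < r) :
    HasDerivAt (laplaceMoment g k) (-laplaceMoment g (k + 1) r) r := by
  have hmeas : ∀ f : ℝ → ℝ, Continuous f →
      AEStronglyMeasurable (fun u => g u * f u) (volume.restrict (Ioi 0)) :=
    fun f hf => hg.mul hf.aestronglyMeasurable
  have hdom : ∀ᵐ u ∂volume.restrict (Ioi 0), ∀ x ∈ Metric.ball r (r / 2),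
      ‖g u * u ^ k * (Real.exp (-x * u) * -u)‖ ≤
        ‖g u * u ^ (k + 1) * Real.exp (-(r / 2) * u)‖ := by
    refine (ae_restrict_iff' measurableSet_Ioi).mpr (.of_forall fun u (hu : 0 < u) x hx => ?_)
    have hx : r / 2 < x := by
      rw [Metric.mem_ball, Real.dist_eq] at hx
      linarith [(abs_lt.mp hx).1]
    have hexp : Real.exp (-x * u) ≤ Real.exp (-(r / 2) * u) := Real.exp_le_exp.mpr (by nlinarith)
    simp only [norm_mul, norm_neg, norm_pow, Real.norm_of_nonneg hu.le, Real.norm_of_nonneg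
      (Real.exp_nonneg _), pow_succ]
    have := mul_le_mul_of_nonneg_left hexp (by positivity : 0 ≤ ‖g u‖ * (u ^ k * u))
    linarith
  have hderiv_integrand : ∀ u x : ℝ, HasDerivAt (fun x => g u * u ^ k * Real.exp (-x * u))
      (g u * u ^ k * (Real.exp (-x * u) * -u)) x := fun u x => by
    simpa using ((hasDerivAt_neg x).mul_const u).exp.const_mul (g u * u ^ k)
  have hderiv := hasDerivAt_integral_of_dominated_loc_of_deriv_le
    (μ := volume.restrict (Ioi 0)) (F := fun x u => g u * u ^ k * Real.exp (-x * u))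
    (F' := fun x u => g u * u ^ k * (Real.exp (-x * u) * -u))
    (Metric.ball_mem_nhds r (half_pos hr))
    (.of_forall fun x => by simp_rw [mul_assoc]; exact hmeas _ (by fun_prop))
    (integrableOn_integrand hg hgC k hr) (by simp_rw [mul_assoc]; exact hmeas _ (by fun_prop))
    hdom
    (integrableOn_integrand hg hgC (k + 1) (half_pos hr)).norm
    (.of_forall fun u x _ => hderiv_integrand u x)
  have hmoment : ∫ u in Ioi 0, g u * u ^ k * (Real.exp (-r * u) * -u) =
      -laplaceMoment g (k + 1) r := by
    rw [laplaceMoment, ← integral_neg]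
    congr 1 with u
    ring
  exact hmoment ▸ hderiv.2

lemma iteratedDeriv_eq (k n : ℕ) {r : ℝ} (hr : 0 < r) :
    iteratedDeriv n (laplaceMoment g k) r = (-1) ^ n * laplaceMoment g (k + n) r := by
  induction n generalizing r with
  | zero => simp
  | succ n ih =>
    have hev : iteratedDeriv n (laplaceMoment g k) =ᶠ[𝓝 r]
        fun x => (-1) ^ n * laplaceMoment g (k + n) x :=
      eventually_of_mem (Ioi_mem_nhds hr) fun x hx => ih hx
    rw [iteratedDeriv_succ, hev.deriv_eq, ((hasDerivAt hg hgC (k + n) hr).const_mul _).deriv,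
      ← add_assoc]
    ring

lemma neg_one_pow_mul_iteratedDeriv_nonneg (hg₀ : ∀ u ∈ Ioi (0:ℝ), 0 ≤ g u) (n : ℕ) {r : ℝ}
    (hr : 0 < r) : 0 ≤ (-1) ^ n * iteratedDeriv n (laplaceMoment g 0) r := by
  rw [iteratedDeriv_eq hg hgC 0 n hr, ← mul_assoc, ← pow_add, Even.neg_one_pow ⟨n, rfl⟩, one_mul]
  exact setIntegral_nonneg measurableSet_Ioi fun u (hu : 0 < u) =>
    mul_nonneg (mul_nonneg (hg₀ u hu) (pow_nonneg hu.le _)) (Real.exp_nonneg _)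

end laplaceMoment

theorem stmt_19 (α ν : ℝ) (hα : α ∈ Set.Ioo (0:ℝ) 2) (hν : 0 < ν) (hαν : α * ν ≤ 2)
    (q : ℝ → ℝ)
    (hq : ∀ r : ℝ, 0 < r →
      q r = (r ^ ((1 : ℝ) / 2) / (2 ^ (-(1 : ℝ) / 2) * π ^ ((3 : ℝ) / 2))) *
        ∫ u in Set.Ioi (0:ℝ),
          (Real.sin (ν * Complex.arg (1 + Complex.exp (π * α / 2 * Complex.I) * (u : ℂ) ^ (α : ℂ))) /
            ‖1 + Complex.exp (π * α / 2 * Complex.I) * (u : ℂ) ^ (α : ℂ)‖ ^ ν) *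
          besselK (-(1 : ℝ) / 2) (r * u) * u ^ ((1 : ℝ) / 2)) :
    (∀ r : ℝ, 0 < r →
      q r = (1 / π) *
        ∫ u in Set.Ioi (0:ℝ),
          (Real.sin (ν * Complex.arg (1 + Complex.exp (π * α / 2 * Complex.I) * (u : ℂ) ^ (α : ℂ))) /
            ‖1 + Complex.exp (π * α / 2 * Complex.I) * (u : ℂ) ^ (α : ℂ)‖ ^ ν) *
          Real.exp (-r * u)) ∧
    (∀ k : ℕ, ∀ r : ℝ, 0 < r → 0 ≤ (-1 : ℝ) ^ k * iteratedDeriv k q r) := by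
  have hq_laplace : ∀ r, 0 < r → q r = 1 / π * laplaceMoment (argWeight α ν) 0 r := by
    intro r hr
    rw [hq r hr, laplaceMoment, ← integral_const_mul, ← integral_const_mul]
    refine setIntegral_congr_fun measurableSet_Ioi fun u (hu : 0 < u) => ?_
    rw [pow_zero, mul_one, mul_left_comm (1 / π), ← rpow_half_div_mul_besselK_neg_half hr hu,
      argWeight]
    ring
  refine ⟨fun r hr => ?_, fun k r hr => ?_⟩
  · simpa only [laplaceMoment, argWeight, pow_zero, mul_one] using hq_laplace r hr
  · have hq_near : q =ᶠ[𝓝 r] fun x => 1 / π * laplaceMoment (argWeight α ν) 0 x :=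
      eventually_of_mem (Ioi_mem_nhds hr) hq_laplace
    rw [(hq_near.iteratedDeriv k).eq_of_nhds, iteratedDeriv_const_mul_field, mul_left_comm]
    exact mul_nonneg (by positivity) <| laplaceMoment.neg_one_pow_mul_iteratedDeriv_nonneg
      ((argWeight.continuousOn hα).aestronglyMeasurable measurableSet_Ioi)
      (fun u hu => argWeight.abs_le hα hν.le hu)
      (fun u hu => argWeight.nonneg hα hν.le hαν hu) k hr
end
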